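/- arXiv:2412.13127 — 3 statements merged into one kernel-verified Lean document; each statement's English description precedes it below -/
import Mathlib

section
/- Let d ≥ 1 be an integer and let G be a graph on vertex set [n] with n > d that is closed in the d-rigidity matroid. Suppose A ⊆ [n] induces a clique in G and v ∉ A is a vertex adjacent in G to at least d vertices of A. Then A ∪ {v} also induces a clique in G. -/
/-- An embedding is generic if its `d·n` coordinates are algebraically independent over `ℚ`. -/
def IsGeneric {n d : ℕ} (pt : Fin n → Fin d → ℝ) : Prop :=
  AlgebraicIndependent ℚ fun vi : Fin n × Fin d => pt vi.1 vi.2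

/-- The rigidity-matrix row of a pair `e`: at the coordinates of a vertex `v ∈ e` it holds
`𝐩(v) − 𝐩(u)` where `u` is the other element of `e`, and it vanishes elsewhere. -/
noncomputable def rRow {n d : ℕ} (pt : Fin n → Fin d → ℝ) (e : Sym2 (Fin n)) :
    Fin n × Fin d → ℝ :=
  fun vi => if h : vi.1 ∈ e then pt vi.1 vi.2 - pt (Sym2.Mem.other h) vi.2 else 0

/-- A graph on `[n]` (with `n > d`) is `d`-rigid if for every generic embedding the span of the
rows of its edges has dimension `d·n − (d+1 choose 2)`. -/
def IsRigid (n d : ℕ) (G : SimpleGraph (Fin n)) : Prop :=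
  ∀ pt : Fin n → Fin d → ℝ, IsGeneric pt →
    Module.finrank ℝ ↥(Submodule.span ℝ (rRow pt '' G.edgeSet)) = d * n - (d + 1).choose 2

/-- The `d`-rigidity closure `C_d(G)` with respect to an embedding `pt`: the graph whose edges
are the pairs `f` with `r_f` in the span of the rows of the edges of `G`. -/
noncomputable def rigidityClosure (n d : ℕ) (pt : Fin n → Fin d → ℝ)
    (G : SimpleGraph (Fin n)) : SimpleGraph (Fin n) where
  Adj x y := x ≠ y ∧ rRow pt s(x, y) ∈ Submodule.span ℝ (rRow pt '' G.edgeSet)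
  symm := ⟨fun x y h => ⟨h.1.symm, by rw [Sym2.eq_swap]; exact h.2⟩⟩
  loopless := ⟨fun x h => h.1 rfl⟩

/-- `G` is closed in the `d`-rigidity matroid: `C_d(G) = G` for every generic embedding. -/
def RigidityClosed (n d : ℕ) (G : SimpleGraph (Fin n)) : Prop :=
  ∀ pt : Fin n → Fin d → ℝ, IsGeneric pt → rigidityClosure n d pt G = G


/-!
Let `B` be `d` neighbours of `v` in `A` and let `a ∈ A`. The `d + 2` lifted points `(1, 𝐩(x))`,
`x ∈ {v, a} ∪ B`, of `ℝ^{d+1}` satisfy a linear relation `∑ λₓ (1, 𝐩(x)) = 0`, and genericity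
forces every `λₓ ≠ 0`, because any `d + 1` of these points are affinely independent. The
weights `λₓ λ_y` then form an equilibrium stress on the complete graph on these points, so the
row of `va` is a combination of the rows of the other pairs, all of which are edges of `G`; as
`G` is closed, `va` is an edge.
-/

theorem ne_zero_of_sum_smul_eq_zero {ι R M : Type*} [DecidableEq ι] [Ring R] [AddCommGroup M]
    [Module R M] {v : ι → M} {K : Finset ι} (hv : ∀ k ∈ K, LinearIndepOn R v (K.erase k))
    {g : ι → R} (hg : ∑ i ∈ K, g i • v i = 0) (hne : ∃ i ∈ K, g i ≠ 0) {k : ι} (hk : k ∈ K) :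
    g k ≠ 0 := by
  intro hk0
  obtain ⟨i, hi, hgi⟩ := hne
  have hzero := linearIndepOn_finset_iff.1 (hv k hk) g
    (by rwa [Finset.sum_erase K (by rw [hk0, zero_smul])])
  by_cases hik : i = k
  · exact hgi (hik ▸ hk0)
  · exact hgi (hzero i (Finset.mem_erase.2 ⟨hik, hi⟩))

theorem Submodule.sum_mem_of_sum_eq_zero {ι R M : Type*} [DecidableEq ι] [Ring R]
    [AddCommGroup M] [Module R M] (p : Submodule R M) {s t : Finset ι} (hts : t ⊆ s)
    {g : ι → M} (hsum : ∑ i ∈ s, g i = 0) (hg : ∀ i ∈ s \ t, g i ∈ p) : ∑ i ∈ t, g i ∈ p := by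
  rw [← Finset.sum_sdiff hts, add_eq_zero_iff_neg_eq] at hsum
  rw [← hsum]
  exact p.neg_mem (p.sum_mem hg)

open Cardinal in
theorem exists_algebraicIndependent_real (ι : Type) [Finite ι] :
    ∃ x : ι → ℝ, AlgebraicIndependent ℚ x := by
  obtain ⟨s, hs⟩ := exists_isTranscendenceBasis ℚ ℝ
  have hs_inf : s.Infinite := by
    intro hfin
    have := hs.isAlgebraic
    have hK : #(Algebra.adjoin ℚ (Set.range ((↑) : s → ℝ))) ≤ ℵ₀ := by
      refine (Algebra.cardinalMk_adjoin_le ℚ _).trans ?_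
      simp [hfin.countable]
    have hR := Algebra.IsAlgebraic.cardinalMk_le_max
      (Algebra.adjoin ℚ (Set.range ((↑) : s → ℝ))) ℝ
    rw [mk_real, sup_eq_right.2 hK] at hR
    exact aleph0_lt_continuum.not_ge hR
  have := hs_inf.to_subtype
  obtain ⟨e⟩ : Nonempty (ι ↪ s) :=
    (le_def ι s).1 ((lt_aleph0_of_finite ι).le.trans (aleph0_le_mk s))
  exact ⟨_, hs.1.comp _ e.injective⟩

theorem exists_isGeneric (n d : ℕ) : ∃ pt : Fin n → Fin d → ℝ, IsGeneric pt := by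
  obtain ⟨x, hx⟩ := exists_algebraicIndependent_real (Fin n × Fin d)
  exact ⟨fun a b => x (a, b), hx⟩

section

variable {n d : ℕ}

open MvPolynomial in
theorem det_cons_one_X_ne_zero {f : Fin (d + 1) → Fin n} (hf : Function.Injective f) :
    (Matrix.of fun i => (Fin.cons 1 fun c => X (f i, c) :
      Fin (d + 1) → MvPolynomial (Fin n × Fin d) ℚ)).det ≠ 0 := by
  intro h
  -- vertex `f 0` goes to the origin and `f c.succ` to the `c`-th unit vector
  have := congrArg (aeval fun vi : Fin n × Fin d => if vi.1 = f vi.2.succ then (1 : ℚ) else 0) h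
  rw [map_zero, AlgHom.map_det, Matrix.det_of_isLowerTriangular] at this
  · refine one_ne_zero ((Finset.prod_eq_one fun i _ => ?_).symm.trans this)
    cases i using Fin.cases <;> simp
  · intro i j (hij : i < j)
    cases j using Fin.cases with
    | zero => exact absurd hij (Fin.not_lt_zero i)
    | succ c => simp [hf.eq_iff, hij.ne]

open MvPolynomial in
theorem IsGeneric.linearIndependent_cons_one {pt : Fin n → Fin d → ℝ} (hpt : IsGeneric pt)
    {f : Fin (d + 1) → Fin n} (hf : Function.Injective f) :
    LinearIndependent ℝ fun i => (Fin.cons 1 (pt (f i)) : Fin (d + 1) → ℝ) := by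
  set M := Matrix.of fun i => (Fin.cons 1 (pt (f i)) : Fin (d + 1) → ℝ)
  set N := Matrix.of fun i => (Fin.cons 1 fun c => X (f i, c) :
    Fin (d + 1) → MvPolynomial (Fin n × Fin d) ℚ)
  have hMN : M = (aeval fun vi : Fin n × Fin d => pt vi.1 vi.2).mapMatrix N := by
    ext i j
    cases j using Fin.cases <;> simp [M, N]
  change LinearIndependent ℝ M.row
  rw [Matrix.linearIndependent_rows_iff_isUnit, Matrix.isUnit_iff_isUnit_det, isUnit_iff_ne_zero,
    hMN, ← AlgHom.map_det]
  exact fun h => det_cons_one_X_ne_zero hf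
    (algebraicIndependent_iff_injective_aeval.1 hpt (h.trans (map_zero _).symm))

theorem IsGeneric.linearIndepOn_cons_one {pt : Fin n → Fin d → ℝ} (hpt : IsGeneric pt)
    {K : Finset (Fin n)} (hK : K.card = d + 1) :
    LinearIndepOn ℝ (fun x => (Fin.cons 1 (pt x) : Fin (d + 1) → ℝ)) K := by
  rw [← K.range_orderEmbOfFin hK, linearIndepOn_range_iff (K.orderEmbOfFin hK).injective]
  exact hpt.linearIndependent_cons_one (K.orderEmbOfFin hK).injective

theorem rRow_apply (pt : Fin n → Fin d → ℝ) (x y u : Fin n) (c : Fin d) :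
    rRow pt s(x, y) (u, c) =
      (if u = x then pt x c - pt y c else 0) + (if u = y then pt y c - pt x c else 0) := by
  by_cases h : u ∈ s(x, y)
  · have hother := Sym2.other_spec h
    rw [rRow, dif_pos h]
    rcases Sym2.mem_iff.1 h with rfl | rfl
    · rw [Sym2.congr_right.1 hother]
      split_ifs <;> simp_all
    · rw [Sym2.eq_swap] at hother
      rw [Sym2.congr_left.1 hother]
      split_ifs <;> simp_all
  · obtain ⟨hx, hy⟩ : u ≠ x ∧ u ≠ y := by simpa [not_or] using h
    simp [rRow, h, hx, hy]

theorem rRow_self (pt : Fin n → Fin d → ℝ) (x : Fin n) : rRow pt s(x, x) = 0 := by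
  ext ⟨u, c⟩
  simp [rRow_apply]

theorem sum_sum_smul_rRow_eq_zero (pt : Fin n → Fin d → ℝ) (K : Finset (Fin n))
    (lam : Fin n → ℝ) (h0 : ∑ x ∈ K, lam x = 0) (h1 : ∑ x ∈ K, lam x • pt x = 0) :
    ∑ x ∈ K, ∑ y ∈ K, (lam x * lam y) • rRow pt s(x, y) = 0 := by
  have half : ∀ u c, ∑ x ∈ K, ∑ y ∈ K,
      lam x * lam y * (if u = x then pt x c - pt y c else 0) = 0 := by
    intro u c
    have h1c : ∑ y ∈ K, lam y * pt y c = 0 := by simpa using congrFun h1 c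
    refine Finset.sum_eq_zero fun x _ => ?_
    split_ifs
    · calc ∑ y ∈ K, lam x * lam y * (pt x c - pt y c)
          = lam x * (pt x c * ∑ y ∈ K, lam y - ∑ y ∈ K, lam y * pt y c) := by
            rw [Finset.mul_sum, ← Finset.sum_sub_distrib, Finset.mul_sum]
            exact Finset.sum_congr rfl fun y _ => by ring
        _ = 0 := by rw [h0, h1c]; ring
    · simp
  ext ⟨u, c⟩
  simp only [Finset.sum_apply, Pi.smul_apply, smul_eq_mul, rRow_apply, mul_add,
    Finset.sum_add_distrib, Pi.zero_apply, half, zero_add]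
  rw [Finset.sum_comm]
  simpa only [mul_comm (lam _) (lam _)] using half u c

theorem rRow_mem_span_of_forall_adj {pt : Fin n → Fin d → ℝ} (hpt : IsGeneric pt)
    {G : SimpleGraph (Fin n)} {K : Finset (Fin n)} (hK : K.card = d + 2) {u w : Fin n}
    (hu : u ∈ K) (hw : w ∈ K) (huw : u ≠ w)
    (hadj : ∀ x ∈ K, ∀ y ∈ K, x ≠ y → s(x, y) ≠ s(u, w) → G.Adj x y) :
    rRow pt s(u, w) ∈ Submodule.span ℝ (rRow pt '' G.edgeSet) := by
  classical
  set S := Submodule.span ℝ (rRow pt '' G.edgeSet)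
  set W := fun x => (Fin.cons 1 (pt x) : Fin (d + 1) → ℝ)
  have hdep : ¬ LinearIndepOn ℝ W K := fun h => by
    simpa [hK] using h.fintype_card_le_finrank
  obtain ⟨lam, hrel, hne⟩ := not_linearIndepOn_finset_iff.1 hdep
  have hlam : ∀ x ∈ K, lam x ≠ 0 := fun x hx =>
    ne_zero_of_sum_smul_eq_zero (fun k hk => hpt.linearIndepOn_cons_one
      (by rw [Finset.card_erase_of_mem hk, hK]; rfl)) hrel hne hx
  have hstress := sum_sum_smul_rRow_eq_zero pt K lam
    (by simpa [W] using congrFun hrel 0)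
    (funext fun c => by simpa [W] using congrFun hrel c.succ)
  rw [← Finset.sum_product'] at hstress
  have hpair : ((u, w) : Fin n × Fin n) ≠ (w, u) := fun h => huw (Prod.ext_iff.1 h).1
  have hmem := S.sum_mem_of_sum_eq_zero (t := {(u, w), (w, u)})
    (by simp [Finset.insert_subset_iff, hu, hw]) hstress ?_
  · rw [Finset.sum_pair hpair, Sym2.eq_swap (a := w), mul_comm (lam w), ← add_smul] at hmem
    exact (S.smul_mem_iff (by simpa using mul_ne_zero (hlam u hu) (hlam w hw))).1 hmem
  rintro ⟨x, y⟩ hxy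
  simp only [Finset.mem_sdiff, Finset.mem_product, Finset.mem_insert, Finset.mem_singleton,
    Prod.ext_iff, not_or] at hxy
  obtain ⟨⟨hx, hy⟩, hxy₁, hxy₂⟩ := hxy
  by_cases hxy₀ : x = y
  · simp [hxy₀, rRow_self]
  refine S.smul_mem _ (Submodule.subset_span ⟨s(x, y), ?_, rfl⟩)
  refine hadj x hx y hy hxy₀ fun h => ?_
  rcases Sym2.eq_iff.1 h with ⟨rfl, rfl⟩ | ⟨rfl, rfl⟩ <;> simp_all

theorem RigidityClosed.adj_of_isClique_insert {G : SimpleGraph (Fin n)}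
    (hG : RigidityClosed n d G) {B : Finset (Fin n)} (hB : B.card = d) {u w : Fin n}
    (hu : u ∉ B) (hw : w ∉ B) (huw : u ≠ w) (hcu : G.IsClique (insert u (B : Set (Fin n))))
    (hcw : G.IsClique (insert w (B : Set (Fin n)))) : G.Adj u w := by
  classical
  obtain ⟨pt, hpt⟩ := exists_isGeneric n d
  rw [← hG pt hpt]
  refine ⟨huw, rRow_mem_span_of_forall_adj hpt (K := insert u (insert w B)) ?_ (by simp)
    (by simp) huw fun x hx y hy hxy hne => ?_⟩
  · rw [Finset.card_insert_of_notMem (by simp [huw, hu]), Finset.card_insert_of_notMem hw, hB]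
  simp only [Finset.mem_insert] at hx hy
  -- a pair other than `{u, w}` that meets `w` misses `u`
  by_cases hxw : x = w ∨ y = w
  · refine hcw ?_ ?_ hxy <;> aesop
  · refine hcu ?_ ?_ hxy <;> aesop

end

theorem stmt_5_general (d n : ℕ) (G : SimpleGraph (Fin n))
    (hG : RigidityClosed n d G) (A : Set (Fin n)) (hA : G.IsClique A)
    (v : Fin n) (hv : v ∉ A)
    (hadj : d ≤ {a : Fin n | a ∈ A ∧ G.Adj v a}.ncard) :
    G.IsClique (A ∪ {v}) := by
  rw [Set.union_singleton, SimpleGraph.isClique_insert]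
  refine ⟨hA, fun a ha hva => ?_⟩
  by_contra hnadj
  obtain ⟨B, hBN, hBcard⟩ := Set.exists_subset_card_eq hadj
  lift B to Finset (Fin n) using B.toFinite
  have hBA : (B : Set (Fin n)) ⊆ A := fun b hb => (hBN hb).1
  refine hnadj (hG.adj_of_isClique_insert (Set.ncard_coe_finset B ▸ hBcard)
    (fun h => hv (hBA h)) (fun h => hnadj (hBN h).2) hva ?_ (hA.subset (Set.insert_subset ha hBA)))
  exact SimpleGraph.isClique_insert.2 ⟨hA.subset hBA, fun b hb _ => (hBN hb).2⟩

/-- If `G` is closed in the `d`-rigidity matroid, `A` induces a clique in `G`,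
and `v ∉ A` has at least `d` neighbors in `A`, then `A ∪ {v}` induces a clique in `G`. -/
theorem stmt_5 (d n : ℕ) (hd : 1 ≤ d) (hn : d < n) (G : SimpleGraph (Fin n))
    (hG : RigidityClosed n d G) (A : Set (Fin n)) (hA : G.IsClique A)
    (v : Fin n) (hv : v ∉ A)
    (hadj : d ≤ {a : Fin n | a ∈ A ∧ G.Adj v a}.ncard) :
    G.IsClique (A ∪ {v}) :=
  stmt_5_general d n G hG A hA v hv hadj
end

section
/- Let p, ε ∈ (0,1) be real numbers, let S be a finite set of m vectors in a real vector space with dim span_ℝ(S) ≤ D, and let S_p be the random subset of S containing each element of S independently with probability p. Then P(|{v ∈ S : v ∈ span_ℝ(S_p)}| < ε·m) ≤ P(X ≤ D), where X is a binomial random variable with parameters m and (1−ε)p. -/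
open MeasureTheory Filter Topology

noncomputable def bernoulliMeasure (p : ℝ) : Measure Bool :=
  ENNReal.ofReal p • Measure.dirac true + ENNReal.ofReal (1 - p) • Measure.dirac false

instance (p : ℝ) : IsFiniteMeasure (bernoulliMeasure p) := by
  constructor
  simp only [bernoulliMeasure, Measure.add_apply, Measure.smul_apply, smul_eq_mul,
    measure_univ, mul_one]
  exact ENNReal.add_lt_top.mpr ⟨ENNReal.ofReal_lt_top, ENNReal.ofReal_lt_top⟩

/-!
Reveal the coins in the order of the vectors and call index `i` fresh if `v i` is not in the
span of the chosen vectors before it. Chosen and non-fresh vectors all lie in `span S_p`, and the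
fresh chosen ones are linearly independent, so there are at most `D` of them. Hence on the event,
at least `a = ⌈(1 - ε) m⌉` fresh indices are not chosen while at most `D` are. Each fresh index is
chosen with probability `p` independently of the past, so this has probability at most that of
`a` failures before the `(D + 1)`-st success, namely `P(Bin(a + D, p) ≤ D)`.

Finally `P(Bin(n, p) ≤ d) ≤ P(Bin(m, q) ≤ d)` whenever `(1 - p)^n ≤ (1 - q)^m (1 - p)^d`: induct
on `d`, conditioning on the first success and coupling the first-success times of the two
sequences by quantiles. With `n = a + D`, `q = (1 - ε) p` the condition is
`(1 - p)^a ≤ (1 - q)^m`, which follows from Bernoulli's inequality `(1 - p)^(1 - ε) ≤ 1 - q`.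
-/

open Finset

noncomputable def binomCDF (q : ℝ) (n d : ℕ) : ℝ :=
  ∑ k ∈ range (d + 1), (n.choose k : ℝ) * q ^ k * (1 - q) ^ (n - k)

section binomCDF

variable {q : ℝ}

lemma binomCDF_nonneg (hq0 : 0 ≤ q) (hq1 : q ≤ 1) (n d : ℕ) : 0 ≤ binomCDF q n d := by
  have : 0 ≤ 1 - q := by linarith
  unfold binomCDF
  positivity

lemma binomCDF_zero_right (n : ℕ) : binomCDF q n 0 = (1 - q) ^ n := by
  simp [binomCDF]

lemma binomCDF_mono (hq0 : 0 ≤ q) (hq1 : q ≤ 1) (n : ℕ) : Monotone (binomCDF q n) := by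
  intro d d' h
  have : 0 ≤ 1 - q := by linarith
  exact sum_le_sum_of_subset_of_nonneg (range_subset_range.2 (by omega))
    fun k _ _ => by positivity

lemma binomCDF_eq_one {n d : ℕ} (h : n ≤ d) : binomCDF q n d = 1 := by
  unfold binomCDF
  rw [← sum_subset (range_subset_range.2 (by omega : n + 1 ≤ d + 1)) fun k _ hk => by
      rw [Nat.choose_eq_zero_of_lt (by simpa using hk)]; simp]
  have h := add_pow q (1 - q) n
  rw [add_sub_cancel, one_pow] at h
  exact (sum_congr rfl fun k _ => by ring).trans h.symm

lemma binomCDF_le_one (hq0 : 0 ≤ q) (hq1 : q ≤ 1) (n d : ℕ) : binomCDF q n d ≤ 1 :=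
  (binomCDF_mono hq0 hq1 n (le_max_right n d)).trans_eq (binomCDF_eq_one (le_max_left n d))

lemma binomCDF_succ_succ (n d : ℕ) :
    binomCDF q (n + 1) (d + 1) = q * binomCDF q n d + (1 - q) * binomCDF q n (d + 1) := by
  have hterm : ∀ k, ((n + 1).choose (k + 1) : ℝ) * q ^ (k + 1) * (1 - q) ^ (n + 1 - (k + 1))
      = q * (n.choose k * q ^ k * (1 - q) ^ (n - k))
        + (1 - q) * (n.choose (k + 1) * q ^ (k + 1) * (1 - q) ^ (n - (k + 1))) := by
    intro k
    rw [Nat.choose_succ_succ, Nat.cast_add, Nat.add_sub_add_right]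
    rcases lt_or_ge n (k + 1) with h | h
    · simp only [Nat.choose_eq_zero_of_lt h, CharP.cast_eq_zero, add_zero, zero_mul, mul_zero]
      ring
    · rw [show n - k = n - (k + 1) + 1 by omega]
      ring
  simp only [binomCDF, sum_range_succ' _ (d + 1), hterm, sum_add_distrib, mul_add, mul_sum]
  simp only [Nat.choose_zero_right, Nat.cast_one, pow_zero, mul_one, tsub_zero, one_mul]
  ring

lemma one_sub_mul_binomCDF_pred_zero_le (hq0 : 0 ≤ q) (a : ℕ) :
    (1 - q) * binomCDF q (a - 1) 0 ≤ binomCDF q a 0 := by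
  rw [binomCDF_zero_right, binomCDF_zero_right]
  rcases a with _ | a
  · simp only [Nat.zero_sub, pow_zero, mul_one]
    linarith
  · rw [Nat.add_sub_cancel, pow_succ']

/-- `binomCDF q (a + d) d` is the probability of at least `a` failures before the `(d + 1)`-st
success; this is its recursion on the first trial. -/
lemma binomCDF_le_of_first_trial (a d : ℕ) :
    q * binomCDF q (a + d) d + (1 - q) * binomCDF q (a - 1 + (d + 1)) (d + 1) ≤
      binomCDF q (a + (d + 1)) (d + 1) := by
  rcases a with _ | a
  · simp only [zero_add, Nat.zero_sub, binomCDF_eq_one le_rfl]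
    linarith
  · rw [Nat.add_sub_cancel, show a + 1 + (d + 1) = a + d + 1 + 1 by ring, binomCDF_succ_succ,
      show a + 1 + d = a + d + 1 by ring, ← add_assoc]

lemma binomCDF_succ_right_eq_sum (n d : ℕ) :
    binomCDF q n (d + 1) =
      ∑ t ∈ range n, (1 - q) ^ t * q * binomCDF q (n - 1 - t) d + (1 - q) ^ n := by
  induction n with
  | zero => simp [binomCDF_eq_one]
  | succ n ih =>
    rw [binomCDF_succ_succ, ih, sum_range_succ']
    simp only [Nat.add_sub_cancel, Nat.sub_zero, Nat.sub_sub, mul_add, mul_sum, pow_succ]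
    ring_nf

/-- `P(min T (n + 1) > t)` for the time `T` of the first success in Bernoulli(`q`) trials. -/
noncomputable def geomSurvival (q : ℝ) (n t : ℕ) : ℝ := if t ≤ n then (1 - q) ^ t else 0

lemma geomSurvival_antitone (hq0 : 0 ≤ q) (hq1 : q ≤ 1) (n : ℕ) : Antitone (geomSurvival q n) := by
  refine antitone_nat_of_succ_le fun t => ?_
  unfold geomSurvival
  split_ifs with h1 h2
  · exact pow_le_pow_of_le_one (by linarith) (by linarith) t.le_succ
  · omega
  · positivity
  · rfl

lemma binomCDF_succ_right_eq_sum_geomSurvival (n d : ℕ) :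
    binomCDF q n (d + 1) = ∑ t ∈ range (n + 1),
      (geomSurvival q n t - geomSurvival q n (t + 1)) *
        (if t < n then binomCDF q (n - 1 - t) d else 1) := by
  rw [binomCDF_succ_right_eq_sum, sum_range_succ]
  congr 1
  · refine sum_congr rfl fun t ht => ?_
    have ht : t < n := mem_range.1 ht
    simp only [geomSurvival, if_pos ht.le, if_pos ht, if_pos (Nat.succ_le_of_lt ht), pow_succ]
    ring
  · simp [geomSurvival]

end binomCDF

lemma max_zero_min_sub_max {x y b b' : ℝ} (hyx : y ≤ x) (hbb : b' ≤ b) :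
    max 0 (min x b - max y b') = max y (min x b) - max y (min x b') := by
  simp only [max_def, min_def]
  split_ifs <;> linarith

lemma sum_range_overlap {x y : ℝ} {B : ℕ → ℝ} {L : ℕ} (hy : 0 ≤ y) (hyx : y ≤ x) (hx : x ≤ 1)
    (hB : Antitone B) (hB0 : B 0 = 1) (hBL : B L = 0) :
    ∑ t ∈ range L, max 0 (min x (B t) - max y (B (t + 1))) = x - y := by
  rw [sum_congr rfl fun t _ => max_zero_min_sub_max hyx (hB t.le_succ),
    sum_range_sub' (fun z => max y (min x (B z))), hB0, hBL, min_eq_left hx, max_eq_right hyx,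
    min_eq_right (hy.trans hyx), max_eq_left hy]

/-- Couple the distributions on `ℕ` with survival functions `A` and `B` by quantiles: `(t, t')`
gets the length `c t t'` of the overlap of `[A (t + 1), A t]` and `[B (t' + 1), B t']`. -/
theorem sum_le_sum_of_quantile_coupling {A B f g : ℕ → ℝ} {K L : ℕ}
    (hA : Antitone A) (hB : Antitone B) (hA0 : A 0 = 1) (hB0 : B 0 = 1)
    (hAK : A K = 0) (hBL : B L = 0)
    (hfg : ∀ t ∈ range K, ∀ t' ∈ range L, B (t' + 1) < A t → A (t + 1) < B t' → f t ≤ g t') :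
    ∑ t ∈ range K, (A t - A (t + 1)) * f t ≤ ∑ t' ∈ range L, (B t' - B (t' + 1)) * g t' := by
  set c : ℕ → ℕ → ℝ := fun t t' => max 0 (min (A t) (B t') - max (A (t + 1)) (B (t' + 1)))
  have hA_mem : ∀ t ∈ range K, 0 ≤ A (t + 1) ∧ A (t + 1) ≤ A t ∧ A t ≤ 1 := fun t ht =>
    ⟨hAK ▸ hA (mem_range.1 ht), hA t.le_succ, hA0 ▸ hA t.zero_le⟩
  have hB_mem : ∀ t' ∈ range L, 0 ≤ B (t' + 1) ∧ B (t' + 1) ≤ B t' ∧ B t' ≤ 1 := fun t ht =>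
    ⟨hBL ▸ hB (mem_range.1 ht), hB t.le_succ, hB0 ▸ hB t.zero_le⟩
  have hrow : ∀ t ∈ range K, ∑ t' ∈ range L, c t t' = A t - A (t + 1) := fun t ht =>
    have ⟨h0, h1, h2⟩ := hA_mem t ht
    sum_range_overlap h0 h1 h2 hB hB0 hBL
  have hcol : ∀ t' ∈ range L, ∑ t ∈ range K, c t t' = B t' - B (t' + 1) := fun t' ht' => by
    have ⟨h0, h1, h2⟩ := hB_mem t' ht'
    simp only [c, min_comm (A _), max_comm (A _)]
    exact sum_range_overlap h0 h1 h2 hA hA0 hAK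
  calc ∑ t ∈ range K, (A t - A (t + 1)) * f t
      = ∑ t ∈ range K, ∑ t' ∈ range L, c t t' * f t := by
        refine sum_congr rfl fun t ht => ?_
        rw [← sum_mul, hrow t ht]
    _ ≤ ∑ t ∈ range K, ∑ t' ∈ range L, c t t' * g t' := by
        refine sum_le_sum fun t ht => sum_le_sum fun t' ht' => ?_
        by_cases hov : max (A (t + 1)) (B (t' + 1)) < min (A t) (B t')
        · rw [max_lt_iff, lt_min_iff, lt_min_iff] at hov
          exact mul_le_mul_of_nonneg_left (hfg t ht t' ht' hov.2.1 hov.1.2) (le_max_left _ _)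
        · have hc : c t t' = 0 := max_eq_left (sub_nonpos.2 (not_lt.1 hov))
          simp [hc]
    _ = ∑ t' ∈ range L, (B t' - B (t' + 1)) * g t' := by
        rw [sum_comm]
        refine sum_congr rfl fun t' ht' => ?_
        rw [← sum_mul, hcol t' ht']

theorem binomCDF_le_binomCDF {p q : ℝ} (hp0 : 0 ≤ p) (hp1 : p < 1) (hq0 : 0 ≤ q) (hq1 : q ≤ 1)
    {d n m : ℕ} (h : (1 - p) ^ n ≤ (1 - q) ^ m * (1 - p) ^ d) :
    binomCDF p n d ≤ binomCDF q m d := by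
  induction d generalizing n m with
  | zero => simpa [binomCDF_zero_right] using h
  | succ d ih =>
    have hp : 0 < 1 - p := by linarith
    have hq : 0 ≤ 1 - q := by linarith
    rw [binomCDF_succ_right_eq_sum_geomSurvival, binomCDF_succ_right_eq_sum_geomSurvival]
    refine sum_le_sum_of_quantile_coupling (geomSurvival_antitone hp0 hp1.le n)
      (geomSurvival_antitone hq0 hq1 m) (by simp [geomSurvival]) (by simp [geomSurvival])
      (by simp [geomSurvival]) (by simp [geomSurvival]) fun t ht t' ht' hlt _ => ?_
    have ht : t ≤ n := Nat.lt_succ_iff.1 (mem_range.1 ht)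
    by_cases ht'm : t' < m
    · simp only [geomSurvival, if_pos ht, if_pos (Nat.succ_le_of_lt ht'm)] at hlt
      obtain ⟨b, rfl⟩ := Nat.exists_eq_add_of_lt ht'm
      rcases ht.lt_or_eq with htn | rfl
      · obtain ⟨a, rfl⟩ := Nat.exists_eq_add_of_lt htn
        simp only [if_pos htn, if_pos ht'm, show t + a + 1 - 1 - t = a by omega,
          show t' + b + 1 - 1 - t' = b by omega]
        refine ih (le_of_mul_le_mul_left ?_ (pow_pos hp (t + 1)))
        calc (1 - p) ^ (t + 1) * (1 - p) ^ a = (1 - p) ^ (t + a + 1) := by ring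
          _ ≤ (1 - q) ^ (t' + b + 1) * (1 - p) ^ (d + 1) := h
          _ = (1 - q) ^ (t' + 1) * (1 - q) ^ b * (1 - p) ^ (d + 1) := by ring
          _ ≤ (1 - p) ^ t * (1 - q) ^ b * (1 - p) ^ (d + 1) := by gcongr
          _ = (1 - p) ^ (t + 1) * ((1 - q) ^ b * (1 - p) ^ d) := by ring
      · -- `t = n` would give `(1 - q)^(t' + 1) < (1 - p)^n ≤ (1 - q)^m` with `t' < m`
        exfalso
        have : (1 - q) ^ (t' + b + 1) ≤ (1 - q) ^ (t' + 1) :=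
          pow_le_pow_of_le_one hq (by linarith) (by omega)
        have : (1 - p) ^ (d + 1) ≤ 1 := pow_le_one₀ hp.le (by linarith)
        nlinarith [pow_nonneg hq (t' + b + 1)]
    · simp only [if_neg ht'm]
      split_ifs
      · exact binomCDF_le_one hp0 hp1.le _ _
      · rfl

lemma one_sub_pow_le_one_sub_mul_pow {p r : ℝ} (hp0 : 0 ≤ p) (hp1 : p < 1) (hr0 : 0 ≤ r)
    (hr1 : r ≤ 1) {a m : ℕ} (ha : r * m ≤ a) : (1 - p) ^ a ≤ (1 - r * p) ^ m := by
  have hp : 0 < 1 - p := by linarith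
  have bernoulli : (1 - p) ^ r ≤ 1 - r * p := by
    have h := rpow_one_add_le_one_add_mul_self (s := -p) (by linarith) hr0 hr1
    rwa [← sub_eq_add_neg, mul_neg, ← sub_eq_add_neg] at h
  calc (1 - p) ^ a = (1 - p) ^ (a : ℝ) := (Real.rpow_natCast _ _).symm
    _ ≤ (1 - p) ^ (r * m) := Real.rpow_le_rpow_of_exponent_ge hp (by linarith) ha
    _ = ((1 - p) ^ r) ^ m := by rw [Real.rpow_mul hp.le, Real.rpow_natCast]
    _ ≤ (1 - r * p) ^ m := by gcongr

noncomputable def bernoulliWeight {m : ℕ} (p : ℝ) (g : Fin m → Bool) : ℝ :=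
  ∏ i, if g i then p else 1 - p

lemma bernoulliWeight_nonneg {m : ℕ} {p : ℝ} (hp0 : 0 ≤ p) (hp1 : p ≤ 1) (g : Fin m → Bool) :
    0 ≤ bernoulliWeight p g :=
  prod_nonneg fun i _ => by split_ifs <;> linarith

lemma sum_filter_bernoulliWeight_succ {m : ℕ} (p : ℝ) (P : (Fin (m + 1) → Bool) → Prop)
    [DecidablePred P] :
    ∑ g ∈ univ.filter P, bernoulliWeight p g =
      p * ∑ g ∈ univ.filter (fun g => P (Fin.cons true g)), bernoulliWeight p g +
        (1 - p) * ∑ g ∈ univ.filter (fun g => P (Fin.cons false g)), bernoulliWeight p g := by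
  simp only [sum_filter, mul_sum]
  rw [← (Fin.consEquiv fun _ => Bool).sum_comp, Fintype.sum_prod_type, Fintype.sum_bool]
  simp [Fin.consEquiv, bernoulliWeight, Fin.prod_univ_succ]

lemma bernoulliMeasure_singleton (p : ℝ) (b : Bool) :
    bernoulliMeasure p {b} = ENNReal.ofReal (if b then p else 1 - p) := by
  cases b <;> simp [bernoulliMeasure]

lemma pi_bernoulliMeasure_coe_finset {m : ℕ} {p : ℝ} (hp0 : 0 ≤ p) (hp1 : p ≤ 1)
    (s : Finset (Fin m → Bool)) :
    Measure.pi (fun _ : Fin m => bernoulliMeasure p) s =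
      ENNReal.ofReal (∑ g ∈ s, bernoulliWeight p g) := by
  rw [← sum_measure_singleton,
    ENNReal.ofReal_sum_of_nonneg fun g _ => bernoulliWeight_nonneg hp0 hp1 g]
  refine sum_congr rfl fun g _ => ?_
  rw [← Set.univ_pi_singleton, Measure.pi_pi, bernoulliWeight,
    ENNReal.ofReal_prod_of_nonneg fun i _ => by split_ifs <;> linarith]
  simp [bernoulliMeasure_singleton]

section Exploration

variable {E : Type*} [AddCommGroup E] [Module ℝ E] {m : ℕ}

/-- The coins `g` are revealed in the order of `Fin m`; `W` is the span of the vectors chosen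
before, which lets the exploration be analysed by induction through `Fin.cons`. -/
def priorSpan (v : Fin m → E) (W : Submodule ℝ E) (g : Fin m → Bool) (i : Fin m) :
    Submodule ℝ E :=
  W ⊔ Submodule.span ℝ (v '' {j | j < i ∧ g j = true})

open Classical in
noncomputable def freshHits (v : Fin m → E) (W : Submodule ℝ E) (g : Fin m → Bool) : ℕ :=
  #{i | g i = true ∧ v i ∉ priorSpan v W g i}

open Classical in
noncomputable def freshMisses (v : Fin m → E) (W : Submodule ℝ E) (g : Fin m → Bool) : ℕ :=
  #{i | g i = false ∧ v i ∉ priorSpan v W g i}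

lemma priorSpan_cons_zero (v : Fin (m + 1) → E) (W : Submodule ℝ E) (b : Bool)
    (g : Fin m → Bool) : priorSpan v W (Fin.cons b g) 0 = W := by
  simp [priorSpan]

lemma priorSpan_cons_succ (v : Fin (m + 1) → E) (W : Submodule ℝ E) (b : Bool)
    (g : Fin m → Bool) (i : Fin m) :
    priorSpan v W (Fin.cons b g) i.succ =
      priorSpan (Fin.tail v) (if b then W ⊔ ℝ ∙ v 0 else W) g i := by
  have : v '' {j | j < i.succ ∧ (Fin.cons b g : Fin (m + 1) → Bool) j = true} =
      v '' {j | j = 0 ∧ b = true} ∪ Fin.tail v '' {j | j < i ∧ g j = true} := by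
    ext x
    simp [Fin.exists_fin_succ, Fin.tail]
  simp only [priorSpan, this]
  cases b <;> simp [Submodule.span_insert, sup_assoc]

open Classical in
lemma freshHits_cons (v : Fin (m + 1) → E) (W : Submodule ℝ E) (b : Bool) (g : Fin m → Bool) :
    freshHits v W (Fin.cons b g) =
      let n := freshHits (Fin.tail v) (if b then W ⊔ ℝ ∙ v 0 else W) g
      if b = true ∧ v 0 ∉ W then n + 1 else n := by
  simp only [freshHits, Fin.card_filter_univ_succ, Fin.cons_zero, Fin.cons_succ,
    priorSpan_cons_zero, priorSpan_cons_succ]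
  rfl

open Classical in
lemma freshMisses_cons (v : Fin (m + 1) → E) (W : Submodule ℝ E) (b : Bool) (g : Fin m → Bool) :
    freshMisses v W (Fin.cons b g) =
      let n := freshMisses (Fin.tail v) (if b then W ⊔ ℝ ∙ v 0 else W) g
      if b = false ∧ v 0 ∉ W then n + 1 else n := by
  simp only [freshMisses, Fin.card_filter_univ_succ, Fin.cons_zero, Fin.cons_succ,
    priorSpan_cons_zero, priorSpan_cons_succ]
  rfl

theorem sum_bernoulliWeight_freshMisses_freshHits_le {p : ℝ} (hp0 : 0 ≤ p) (hp1 : p ≤ 1)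
    (v : Fin m → E) (W : Submodule ℝ E) (a D : ℕ) :
    ∑ g ∈ univ.filter (fun g => a ≤ freshMisses v W g ∧ freshHits v W g ≤ D),
      bernoulliWeight p g ≤ binomCDF p (a + D) D := by
  induction m generalizing W a D with
  | zero =>
    rcases a with _ | a
    · calc _ ≤ ∑ g : Fin 0 → Bool, bernoulliWeight p g :=
            sum_le_univ_sum_of_nonneg (bernoulliWeight_nonneg hp0 hp1)
        _ = binomCDF p (0 + D) D := by simp [bernoulliWeight, binomCDF_eq_one]
    · simpa [freshMisses] using binomCDF_nonneg hp0 hp1 _ _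
  | succ m ih =>
    rw [sum_filter_bernoulliWeight_succ]
    simp only [freshHits_cons, freshMisses_cons]
    by_cases hv : v 0 ∈ W
    · simp only [hv, not_true, and_false, if_false]
      calc _ ≤ p * binomCDF p (a + D) D + (1 - p) * binomCDF p (a + D) D := by
            exact add_le_add (mul_le_mul_of_nonneg_left (ih _ _ _ _) hp0)
              (mul_le_mul_of_nonneg_left (ih _ _ _ _) (by linarith))
        _ = binomCDF p (a + D) D := by ring
    · simp only [hv, not_false_eq_true, and_true, if_true, Bool.false_eq_true,
        Bool.true_eq_false, if_false, ← Nat.sub_le_iff_le_add]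
      have hp1' : 0 ≤ 1 - p := by linarith
      rcases D with _ | D
      · rw [filter_false_of_mem fun g _ => by omega, sum_empty, mul_zero, zero_add]
        exact (mul_le_mul_of_nonneg_left (ih _ _ _ _) hp1').trans
          (one_sub_mul_binomCDF_pred_zero_le hp0 a)
      · simp only [Nat.add_le_add_iff_right]
        exact (add_le_add (mul_le_mul_of_nonneg_left (ih _ _ _ _) hp0)
          (mul_le_mul_of_nonneg_left (ih _ _ _ _) hp1')).trans (binomCDF_le_of_first_trial a D)

lemma linearIndepOn_freshHits (v : Fin m → E) (g : Fin m → Bool) :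
    LinearIndepOn ℝ v {i | g i = true ∧ v i ∉ priorSpan v ⊥ g i} := by
  classical
  suffices h : ∀ s : Finset (Fin m), ↑s ⊆ {i | g i = true ∧ v i ∉ priorSpan v ⊥ g i} →
      LinearIndepOn ℝ v (s : Set (Fin m)) by
    simpa using h (univ.filter fun i => g i = true ∧ v i ∉ priorSpan v ⊥ g i) (by simp)
  intro s
  induction s using Finset.induction_on_max with
  | empty => simp
  | insert a s hlt ih =>
    intro hsub
    rw [coe_insert, Set.insert_subset_iff] at hsub
    rw [coe_insert, linearIndepOn_insert fun ha => lt_irrefl a (hlt a ha)]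
    refine ⟨ih hsub.2, fun hmem => hsub.1.2 (Submodule.mem_sup_right (Submodule.span_mono ?_ hmem))⟩
    exact Set.image_mono fun j hj => ⟨hlt j hj, (hsub.2 hj).1⟩

lemma freshHits_le_finrank (v : Fin m → E) (g : Fin m → Bool) :
    freshHits v ⊥ g ≤ Module.finrank ℝ (Submodule.span ℝ (Set.range v)) := by
  classical
  set T := univ.filter fun i => g i = true ∧ v i ∉ priorSpan v ⊥ g i
  have hT : LinearIndepOn ℝ v (T : Set (Fin m)) := by
    simpa [T] using linearIndepOn_freshHits v g
  have := FiniteDimensional.span_of_finite ℝ (Set.finite_range v)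
  calc freshHits v ⊥ g = Fintype.card (T : Set (Fin m)) := by simp [freshHits, T]
    _ = Module.finrank ℝ (Submodule.span ℝ (Set.range fun i : (T : Set (Fin m)) => v i)) :=
        (finrank_span_eq_card hT).symm
    _ ≤ Module.finrank ℝ (Submodule.span ℝ (Set.range v)) :=
        Submodule.finrank_mono (Submodule.span_mono (Set.range_comp_subset_range _ v))

lemma le_ncard_mem_span_add_freshMisses (v : Fin m → E) (W : Submodule ℝ E)
    (g : Fin m → Bool) :
    m ≤ {i | v i ∈ W ⊔ Submodule.span ℝ (v '' {j | g j = true})}.ncard + freshMisses v W g := by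
  classical
  have htotal := Set.ncard_add_ncard_compl {i | v i ∈ W ⊔ Submodule.span ℝ (v '' {j | g j = true})}
  rw [Nat.card_eq_fintype_card, Fintype.card_fin, Set.compl_ofPred] at htotal
  suffices h : {i | v i ∉ W ⊔ Submodule.span ℝ (v '' {j | g j = true})}.ncard ≤
      freshMisses v W g by omega
  rw [freshMisses, ← Set.ncard_coe_finset]
  refine Set.ncard_le_ncard fun i hi => ?_
  simp only [Set.mem_ofPred_eq, coe_filter, mem_univ, true_and] at hi ⊢
  refine ⟨Bool.eq_false_iff.2 fun hg => hi (Submodule.mem_sup_right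
    (Submodule.subset_span ⟨i, hg, rfl⟩)), fun hmem => hi ?_⟩
  exact sup_le_sup_left (Submodule.span_mono (Set.image_mono fun j hj => hj.2)) W hmem

lemma ceil_le_freshMisses_of_ncard_lt {ε : ℝ} (v : Fin m → E) (g : Fin m → Bool)
    (h : ({i | v i ∈ Submodule.span ℝ (v '' {j | g j = true})}.ncard : ℝ) < ε * m) :
    ⌈(1 - ε) * m⌉₊ ≤ freshMisses v ⊥ g := by
  have hcover := le_ncard_mem_span_add_freshMisses v ⊥ g
  rw [bot_sup_eq] at hcover
  have hcover' := (Nat.cast_le (α := ℝ)).2 hcover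
  push_cast at hcover'
  exact Nat.ceil_le.2 (by linarith)

end Exploration

theorem stmt_10_general {E : Type} [AddCommGroup E] [Module ℝ E]
    (p ε : ℝ) (hp : p ∈ Set.Ioo (0 : ℝ) 1) (hε : ε ∈ Set.Ioo (0 : ℝ) 1)
    (m D : ℕ) (vec : Fin m → E)
    (hD : Module.finrank ℝ ↥(Submodule.span ℝ (Set.range vec)) ≤ D) :
    Measure.pi (fun _ : Fin m => bernoulliMeasure p)
      {f : Fin m → Bool |
        ({i : Fin m | vec i ∈ Submodule.span ℝ (vec '' {j | f j = true})}.ncard : ℝ) < ε * m}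
    ≤ ENNReal.ofReal (∑ k ∈ Finset.range (D + 1),
        (m.choose k : ℝ) * ((1 - ε) * p) ^ k * (1 - (1 - ε) * p) ^ (m - k)) := by
  classical
  obtain ⟨hp0, hp1⟩ := hp
  obtain ⟨hε0, hε1⟩ := hε
  set a := ⌈(1 - ε) * m⌉₊
  have hevent : {f : Fin m → Bool |
      ({i | vec i ∈ Submodule.span ℝ (vec '' {j | f j = true})}.ncard : ℝ) < ε * m} ⊆
      ↑(univ.filter fun g => a ≤ freshMisses vec ⊥ g ∧ freshHits vec ⊥ g ≤ D) := fun g hg => by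
    simpa using ⟨ceil_le_freshMisses_of_ncard_lt vec g hg, (freshHits_le_finrank vec g).trans hD⟩
  have hpow : (1 - p) ^ (a + D) ≤ (1 - (1 - ε) * p) ^ m * (1 - p) ^ D := by
    rw [pow_add]
    exact mul_le_mul_of_nonneg_right (one_sub_pow_le_one_sub_mul_pow hp0.le hp1
      (by linarith) (by linarith) (Nat.le_ceil _)) (pow_nonneg (by linarith) D)
  calc _ ≤ _ := measure_mono hevent
    _ = _ := pi_bernoulliMeasure_coe_finset hp0.le hp1.le _
    _ ≤ ENNReal.ofReal (binomCDF ((1 - ε) * p) m D) := ENNReal.ofReal_le_ofReal <|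
      (sum_bernoulliWeight_freshMisses_freshHits_le hp0.le hp1.le vec ⊥ a D).trans
        (binomCDF_le_binomCDF hp0.le hp1 (by positivity) (by nlinarith) hpow)

/-- Let `p, ε ∈ (0,1)`, and let `S` be a set of `m` vectors (given by an
injective enumeration `vec : Fin m → E`) with `dim span(S) ≤ D`. Over the random subset `S_p`
of `S` keeping each vector independently with probability `p`,
`P(|{v ∈ S : v ∈ span(S_p)}| < ε·m) ≤ P(X ≤ D)` where `X ~ Bin(m, (1−ε)p)`. -/
theorem stmt_10 {E : Type} [AddCommGroup E] [Module ℝ E]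
    (p ε : ℝ) (hp : p ∈ Set.Ioo (0 : ℝ) 1) (hε : ε ∈ Set.Ioo (0 : ℝ) 1)
    (m D : ℕ) (vec : Fin m → E) (hinj : Function.Injective vec)
    (hD : Module.finrank ℝ ↥(Submodule.span ℝ (Set.range vec)) ≤ D) :
    Measure.pi (fun _ : Fin m => bernoulliMeasure p)
      {f : Fin m → Bool |
        ({i : Fin m | vec i ∈ Submodule.span ℝ (vec '' {j | f j = true})}.ncard : ℝ) < ε * m}
    ≤ ENNReal.ofReal (∑ k ∈ Finset.range (D + 1),
        (m.choose k : ℝ) * ((1 - ε) * p) ^ k * (1 - (1 - ε) * p) ^ (m - k)) :=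
  stmt_10_general p ε hp hε m D vec hD
end

section
/- Let C_* = 2/(1 − log 2). For every c > 1, the function φ_c(t) = 1 − c + t − t·log(t/c) has a smallest nonnegative root a(c), and 0 < a(c) < c. Moreover, φ_{C_*}(C_*/2) = 0, and for every c > 1 one has a(c) < c/2 if and only if c < C_*. -/
/-- `φ_c(t) = 1 − c + t − t·log(t/c)` (note `Real.log 0 = 0`, so `phi c 0 = 1 - c`). -/
noncomputable def phi (c t : ℝ) : ℝ := 1 - c + t - t * Real.log (t / c)

/-- `a(c)`: the smallest nonnegative root of `φ_c`. -/
noncomputable def rootA (c : ℝ) : ℝ := sInf {t : ℝ | 0 ≤ t ∧ phi c t = 0}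

/-!
Since `φ_c'(t) = -log (t / c)`, the function `φ_c` is strictly increasing on `[0, c]`, where it
goes from `1 - c < 0` to `1`. Its zero set is closed, so `a(c)` is a root, and it is the unique
root in `(0, c)`. Comparing with `c / 2` then amounts to the sign of
`φ_c(c / 2) = 1 - (c / 2)(1 - log 2)`, which vanishes exactly at `c = C_*`.
-/

open Real Set

lemma continuous_phi {c : ℝ} (hc : c ≠ 0) : Continuous (phi c) := by
  have h : phi c = fun t => 1 - c + t - c * ((t / c) * log (t / c)) := by
    funext t
    unfold phi
    field_simp
  rw [h]
  fun_prop

lemma phi_zero (c : ℝ) : phi c 0 = 1 - c := by simp [phi]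

lemma phi_self {c : ℝ} (hc : c ≠ 0) : phi c c = 1 := by
  simp [phi, div_self hc]

lemma phi_half (c : ℝ) : phi c (c / 2) = 1 - c / 2 * (1 - log 2) := by
  rcases eq_or_ne c 0 with rfl | hc
  · simp [phi]
  rw [phi, show c / 2 / c = 2⁻¹ by field_simp, log_inv]
  ring

lemma hasDerivAt_phi {c t : ℝ} (hc : c ≠ 0) (ht : t ≠ 0) :
    HasDerivAt (phi c) (-log (t / c)) t := by
  have hlog : HasDerivAt (fun s => log (s / c)) (1 / c / (t / c)) t :=
    ((hasDerivAt_id t).div_const c).log (div_ne_zero ht hc)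
  have h := ((hasDerivAt_id' t).const_add (1 - c)).sub ((hasDerivAt_id' t).mul hlog)
  refine h.congr_deriv ?_
  field_simp
  ring

lemma strictMonoOn_phi {c : ℝ} (hc : 0 < c) : StrictMonoOn (phi c) (Icc 0 c) := by
  refine strictMonoOn_of_deriv_pos (convex_Icc 0 c) (continuous_phi hc.ne').continuousOn ?_
  rw [interior_Icc]
  rintro t ⟨ht0, htc⟩
  rw [(hasDerivAt_phi hc.ne' ht0.ne').deriv, neg_pos]
  exact log_neg (div_pos ht0 hc) ((div_lt_one hc).2 htc)

lemma exists_phi_eq_zero {c : ℝ} (hc : 1 < c) : ∃ t ∈ Ioo 0 c, phi c t = 0 := by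
  have hc0 : 0 < c := zero_lt_one.trans hc
  have h0 : phi c 0 < 0 := by rw [phi_zero]; linarith
  have h1 : 0 < phi c c := by rw [phi_self hc0.ne']; exact one_pos
  exact intermediate_value_Ioo hc0.le (continuous_phi hc0.ne').continuousOn ⟨h0, h1⟩

lemma isLeast_rootA {c : ℝ} (hc : 1 < c) :
    IsLeast {t : ℝ | 0 ≤ t ∧ phi c t = 0} (rootA c) := by
  have hc0 : 0 < c := zero_lt_one.trans hc
  obtain ⟨t, ht, hroot⟩ := exists_phi_eq_zero hc
  have hclosed : IsClosed {t : ℝ | 0 ≤ t ∧ phi c t = 0} :=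
    isClosed_Ici.inter (isClosed_singleton.preimage (continuous_phi hc0.ne'))
  have hbdd : BddBelow {t : ℝ | 0 ≤ t ∧ phi c t = 0} := ⟨0, fun _ h => h.1⟩
  exact ⟨hclosed.csInf_mem ⟨t, ht.1.le, hroot⟩ hbdd, fun _ h => csInf_le hbdd h⟩

lemma rootA_mem_Ioo {c : ℝ} (hc : 1 < c) : rootA c ∈ Ioo 0 c := by
  obtain ⟨⟨ha0, hroot⟩, hleast⟩ := isLeast_rootA hc
  obtain ⟨t, ht, htroot⟩ := exists_phi_eq_zero hc
  refine ⟨ha0.lt_of_ne ?_, (hleast ⟨ht.1.le, htroot⟩).trans_lt ht.2⟩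
  rintro h
  rw [← h, phi_zero] at hroot
  linarith

lemma rootA_lt_iff {c t : ℝ} (hc : 1 < c) (ht : t ∈ Icc 0 c) :
    rootA c < t ↔ 0 < phi c t := by
  have ha := rootA_mem_Ioo hc
  rw [← (isLeast_rootA hc).1.2]
  exact ((strictMonoOn_phi (zero_lt_one.trans hc)).lt_iff_lt ⟨ha.1.le, ha.2.le⟩ ht).symm

/-- Let `C_* = 2/(1 − log 2)`. For every `c > 1`, `a(c)` is the smallest
nonnegative root of `φ_c`, and `0 < a(c) < c`. Moreover `φ_{C_*}(C_*/2) = 0`, and for `c > 1`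
one has `a(c) < c/2` iff `c < C_*`. -/
theorem stmt_18 :
    (∀ c : ℝ, 1 < c →
      (0 ≤ rootA c ∧ phi c (rootA c) = 0 ∧
        (∀ t : ℝ, 0 ≤ t → phi c t = 0 → rootA c ≤ t)) ∧
      0 < rootA c ∧ rootA c < c) ∧
    phi (2 / (1 - Real.log 2)) ((2 / (1 - Real.log 2)) / 2) = 0 ∧
    (∀ c : ℝ, 1 < c → (rootA c < c / 2 ↔ c < 2 / (1 - Real.log 2))) := by
  have hlog2 : 0 < 1 - log 2 := by linarith [log_two_lt_d9]
  refine ⟨fun c hc => ?_, ?_, fun c hc => ?_⟩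
  · obtain ⟨⟨ha0, hroot⟩, hleast⟩ := isLeast_rootA hc
    exact ⟨⟨ha0, hroot, fun t ht0 ht => hleast ⟨ht0, ht⟩⟩, rootA_mem_Ioo hc⟩
  · rw [phi_half]
    field_simp
    ring
  · have hc0 : 0 < c := zero_lt_one.trans hc
    rw [rootA_lt_iff hc ⟨by positivity, by linarith⟩, phi_half, sub_pos, lt_div_iff₀ hlog2]
    constructor <;> intro h <;> linarith
end
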